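/- arXiv:math/0403054 — 4 statements merged into one kernel-verified Lean document; each statement's English description precedes it below -/
import Mathlib

section
/- (Dobinski formula) For every natural number n, the n-th Bell number satisfies B_n = e^{−1} · Σ_{k≥0} k^n / k!, where the series on the right converges. -/
/-- The `n`-th Bell number: the number of partitions of an `n`-element set
into nonempty blocks. -/
noncomputable def bell (n : ℕ) : ℕ :=
  Fintype.card (Finpartition (Finset.univ : Finset (Fin n)))

/-!
Fixing a point `a` and recording the block containing it, a partition of `insert a s` is the
same as a subset `t ⊆ s` (the other members of that block) together with a partition of `s \ t`;
hence `B (n + 1) = ∑ i ≤ n, (n choose i) * B (n - i)`, the recurrence defining `Nat.bell`.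
The numbers `a n = ∑ k, kⁿ / k!` satisfy the same recurrence, because
`(k + 1)ⁿ⁺¹ / (k + 1)! = (k + 1)ⁿ / k! = ∑ i ≤ n, (n choose i) * kⁿ⁻ⁱ / k!`, and `a 0 = e`.
So `a n = B n * e`.
-/

open Finset
open scoped Nat

namespace Finpartition

section GeneralizedBooleanAlgebra

variable {α : Type*} [GeneralizedBooleanAlgebra α] [DecidableEq α] {a b c : α}

theorem parts_avoid_of_mem {P : Finpartition a} (hb : b ∈ P.parts) :
    (P.avoid b).parts = P.parts.erase b := by
  ext c
  rw [mem_avoid, mem_erase]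
  constructor
  · rintro ⟨d, hd, hdb, rfl⟩
    have hne : d ≠ b := by rintro rfl; exact hdb le_rfl
    have hdisj : Disjoint d b := P.disjoint hd hb hne
    rw [hdisj.sdiff_eq_left]
    exact ⟨hne, hd⟩
  · rintro ⟨hne, hc⟩
    have hdisj : Disjoint c b := P.disjoint hc hb hne
    exact ⟨c, hc, fun hcb => P.ne_bot hc (hdisj.eq_bot_of_le hcb), hdisj.sdiff_eq_left⟩

theorem parts_avoid_extend (P : Finpartition a) (hb : b ≠ ⊥) (hab : Disjoint a b)
    (hc : a ⊔ b = c) : ((P.extend hb hab hc).avoid b).parts = P.parts := by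
  rw [parts_avoid_of_mem (by simp), extend_parts, erase_insert]
  exact fun h => hb (hab.symm.eq_bot_of_le (P.le h))

end GeneralizedBooleanAlgebra

variable {α : Type*} [DecidableEq α] {s t : Finset α} {a : α}

def partEqInsertEquiv (ha : a ∉ s) (ht : t ⊆ s) :
    {P : Finpartition (insert a s) // P.part a = insert a t} ≃ Finpartition (s \ t) :=
  have hdisj : Disjoint (s \ t) (insert a t) :=
    disjoint_insert_right.2 ⟨fun h => ha (mem_sdiff.1 h).1, sdiff_disjoint⟩
  have hunion : s \ t ⊔ insert a t = insert a s := by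
    rw [sup_eq_union, union_insert, sdiff_union_of_subset ht]
  { toFun P := (P.1.avoid (insert a t)).copy (by
      rw [insert_sdiff_insert, sdiff_insert_of_notMem ha])
    invFun Q := ⟨Q.extend (insert_ne_empty a t) hdisj hunion,
      part_eq_of_mem _ (mem_insert_self _ _) (mem_insert_self a t)⟩
    left_inv := by
      rintro ⟨P, hP⟩
      have hmem : insert a t ∈ P.parts := hP ▸ P.part_mem.2 (mem_insert_self a s)
      refine Subtype.ext (Finpartition.ext ?_)
      simp only [extend_parts, copy, parts_avoid_of_mem hmem, insert_erase hmem]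
    right_inv Q := Finpartition.ext (parts_avoid_extend Q (insert_ne_empty a t) hdisj hunion) }

end Finpartition

section

variable {α : Type*} [DecidableEq α] {s : Finset α} {a : α}

theorem card_finpartition_insert (ha : a ∉ s) :
    Fintype.card (Finpartition (insert a s)) =
      ∑ t ∈ s.powerset, Fintype.card (Finpartition (s \ t)) := by
  have hmaps : ∀ P ∈ (univ : Finset (Finpartition (insert a s))),
      (P.part a).erase a ∈ s.powerset := fun P _ => by
    simpa only [mem_powerset, erase_insert ha] using erase_subset_erase a (P.part_subset a)
  rw [← card_univ, card_eq_sum_card_fiberwise hmaps]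
  refine sum_congr rfl fun t ht => ?_
  have ht : t ⊆ s := mem_powerset.1 ht
  rw [← Fintype.card_congr (Finpartition.partEqInsertEquiv ha ht), Fintype.card_subtype]
  congr 1
  refine filter_congr fun P _ => erase_eq_iff_eq_insert ?_ (fun h => ha (ht h))
  exact P.mem_part_self.2 (mem_insert_self a s)

theorem card_finpartition_eq_bell (s : Finset α) :
    Fintype.card (Finpartition s) = Nat.bell #s := by
  induction s using Finset.strongInduction with
  | H s ih =>
  obtain rfl | ⟨a, ha⟩ := s.eq_empty_or_nonempty
  · rw [card_empty, Nat.bell_zero]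
    exact Fintype.card_unique (α := Finpartition (⊥ : Finset α))
  rw [← insert_erase ha, card_finpartition_insert (notMem_erase a s),
    card_insert_of_notMem (notMem_erase a s), Nat.bell_succ, ← Nat.range_succ_eq_Iic]
  calc ∑ t ∈ (s.erase a).powerset, Fintype.card (Finpartition (s.erase a \ t))
      _ = ∑ t ∈ (s.erase a).powerset, Nat.bell (#(s.erase a) - #t) := by
        refine sum_congr rfl fun t ht => ?_
        rw [ih _ (sdiff_subset.trans_ssubset (erase_ssubset ha)),
          card_sdiff_of_subset (mem_powerset.1 ht)]
      _ = _ := by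
        simp only [sum_powerset_apply_card (fun m => Nat.bell (#(s.erase a) - m)), smul_eq_mul]

end

theorem bell_eq_nat_bell (n : ℕ) : bell n = Nat.bell n := by
  rw [bell, card_finpartition_eq_bell, card_univ, Fintype.card_fin]

theorem succ_pow_succ_div_factorial_succ (n k : ℕ) :
    ((k + 1 : ℕ) : ℝ) ^ (n + 1) / (k + 1)! =
      ∑ i ∈ range (n + 1), (n.choose i : ℝ) * ((k : ℝ) ^ (n - i) / k !) := by
  rw [Nat.factorial_succ, Nat.cast_mul, pow_succ', mul_div_mul_left _ _ (by positivity),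
    add_comm, Nat.cast_add, Nat.cast_one, add_pow, sum_div]
  refine sum_congr rfl fun i _ => ?_
  rw [one_pow, one_mul]
  ring

theorem Nat.hasSum_pow_div_factorial (n : ℕ) :
    HasSum (fun k : ℕ => (k : ℝ) ^ n / k !) (n.bell * Real.exp 1) := by
  induction n using Nat.strong_induction_on with
  | _ n ih =>
  cases n with
  | zero =>
    simpa [Real.exp_eq_exp_ℝ] using NormedSpace.expSeries_div_hasSum_exp (1 : ℝ)
  | succ n =>
    have hshift : HasSum (fun k : ℕ => ((k + 1 : ℕ) : ℝ) ^ (n + 1) / (k + 1)!)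
        ((n + 1).bell * Real.exp 1) := by
      simp_rw [succ_pow_succ_div_factorial_succ, bell_succ, ← range_succ_eq_Iic, cast_sum,
        sum_mul]
      refine hasSum_sum fun i _ => ?_
      rw [cast_mul, mul_assoc]
      exact (ih (n - i) (by omega)).mul_left _
    simpa using (hasSum_nat_add_iff (f := fun k : ℕ => (k : ℝ) ^ (n + 1) / k !) 1).mp hshift

/-- Dobinski formula: `B_n = e⁻¹ · Σ_{k ≥ 0} kⁿ / k!`, the series being convergent. -/
theorem dobinski (n : ℕ) :
    Summable (fun k : ℕ => (k : ℝ) ^ n / (Nat.factorial k : ℝ)) ∧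
      (bell n : ℝ) = Real.exp (-1) * ∑' k : ℕ, (k : ℝ) ^ n / (Nat.factorial k : ℝ) := by
  have h := Nat.hasSum_pow_div_factorial n
  refine ⟨h.summable, ?_⟩
  rw [h.tsum_eq, bell_eq_nat_bell, mul_left_comm, ← Real.exp_add, neg_add_cancel, Real.exp_zero,
    mul_one]
end

section
/- (Rota) Let L : ℝ[X] → ℝ be the unique linear functional satisfying L(X(X−1)(X−2)⋯(X−n+1)) = 1 for every n ≥ 0 (the falling factorials form a basis of ℝ[X], so L exists and is unique). Then L(X^n) = B_n for every n ≥ 0. -/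
open Finset Polynomial

section KerPart

variable {α β : Type*} [Fintype α] [DecidableEq α]

/-- The kernel partition of a function: the partition into fibers. -/
noncomputable def kerPart (f : α → β) : Finpartition (univ : Finset α) :=
  letI : DecidableRel (Setoid.ker f).r := fun _ _ => Classical.dec _
  Finpartition.ofSetoid (Setoid.ker f)

lemma mem_part_kerPart (f : α → β) (a b : α) :
    b ∈ (kerPart f).part a ↔ f a = f b := by
  letI : DecidableRel (Setoid.ker f).r := fun _ _ => Classical.dec _
  exact Finpartition.mem_part_ofSetoid_iff_rel

lemma finpartition_eq_of_part_eq {P Q : Finpartition (univ : Finset α)}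
    (h : ∀ a, P.part a = Q.part a) : P = Q := by
  ext p
  constructor
  · intro hp
    obtain ⟨a, ha⟩ := P.nonempty_of_mem_parts hp
    rw [← P.part_eq_of_mem hp ha, h]
    exact Q.part_mem.2 (mem_univ a)
  · intro hp
    obtain ⟨a, ha⟩ := Q.nonempty_of_mem_parts hp
    rw [← Q.part_eq_of_mem hp ha, ← h]
    exact P.part_mem.2 (mem_univ a)

variable (β) in
/-- The map sending an embedding of the parts of `π` into `β` to the
corresponding function `α → β`, which has kernel partition `π`. -/
noncomputable def toFun (π : Finpartition (univ : Finset α)) (e : ↑π.parts ↪ β) : α → β :=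
  fun a => e ⟨π.part a, π.part_mem.2 (mem_univ a)⟩

lemma kerPart_toFun (π : Finpartition (univ : Finset α)) (e : ↑π.parts ↪ β) :
    kerPart (toFun β π e) = π := by
  apply finpartition_eq_of_part_eq
  intro a
  ext b
  rw [mem_part_kerPart]
  unfold toFun
  constructor
  · intro h
    have := e.injective h
    have hpart : π.part a = π.part b := congrArg Subtype.val this
    rw [hpart]
    exact π.mem_part (mem_univ b)
  · intro hb
    have : π.part a = π.part b := (π.part_eq_of_mem (π.part_mem.2 (mem_univ a)) hb).symm
    simp [this]

lemma toFun_bijective (π : Finpartition (univ : Finset α)) :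
    Function.Bijective (fun e : ↑π.parts ↪ β =>
      (⟨toFun β π e, kerPart_toFun π e⟩ : {f : α → β // kerPart f = π})) := by
  constructor
  · intro e e' h
    have h' : toFun β π e = toFun β π e' := congrArg Subtype.val h
    ext p
    obtain ⟨a, ha⟩ := π.nonempty_of_mem_parts p.2
    have hpa : π.part a = (p : Finset α) := π.part_eq_of_mem p.2 ha
    have h1 : e ⟨π.part a, π.part_mem.2 (mem_univ a)⟩ = e' ⟨π.part a, π.part_mem.2 (mem_univ a)⟩ :=
      congrFun h' a
    have hsub : (⟨π.part a, π.part_mem.2 (mem_univ a)⟩ : ↑π.parts) = p := Subtype.ext hpa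
    rwa [hsub] at h1
  · rintro ⟨f, hf⟩
    have hmem : ∀ a b : α, b ∈ π.part a ↔ f a = f b := by
      intro a b; rw [← hf]; exact mem_part_kerPart f a b
    -- choose a representative of each part
    have hne : ∀ p : ↑π.parts, (p : Finset α).Nonempty := fun p => π.nonempty_of_mem_parts p.2
    refine ⟨⟨fun p => f (hne p).choose, ?_⟩, ?_⟩
    · intro p q h
      have hp : (hne p).choose ∈ (p : Finset α) := (hne p).choose_spec
      have hq : (hne q).choose ∈ (q : Finset α) := (hne q).choose_spec
      have h1 : (hne q).choose ∈ π.part (hne p).choose := (hmem _ _).2 h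
      have h2 : π.part (hne p).choose = (p : Finset α) := π.part_eq_of_mem p.2 hp
      exact Subtype.ext (π.eq_of_mem_parts p.2 q.2 (h2 ▸ h1) hq)
    · apply Subtype.ext
      funext a
      show f ((hne ⟨π.part a, π.part_mem.2 (mem_univ a)⟩).choose) = f a
      have hc : (hne ⟨π.part a, π.part_mem.2 (mem_univ a)⟩).choose ∈ π.part a :=
        (hne ⟨π.part a, π.part_mem.2 (mem_univ a)⟩).choose_spec
      exact ((hmem a _).1 hc).symm

lemma card_fun_eq_sum [Fintype β] [DecidableEq β] :
    Fintype.card (α → β) =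
      ∑ π : Finpartition (univ : Finset α), Fintype.card (↑π.parts ↪ β) := by
  classical
  rw [← Fintype.card_congr (Equiv.sigmaFiberEquiv (kerPart : (α → β) → _)),
    Fintype.card_sigma]
  refine Finset.sum_congr rfl fun π _ => ?_
  exact (Fintype.card_congr (Equiv.ofBijective _ (toFun_bijective π))).symm

end KerPart

lemma pow_eq_sum_descFactorial (n x : ℕ) :
    x ^ n = ∑ π : Finpartition (univ : Finset (Fin n)), x.descFactorial π.parts.card := by
  classical
  have h := card_fun_eq_sum (α := Fin n) (β := Fin x)
  rw [Fintype.card_fun, Fintype.card_fin, Fintype.card_fin] at h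
  rw [h]
  refine Finset.sum_congr rfl fun π _ => ?_
  rw [Fintype.card_embedding_eq, Fintype.card_coe, Fintype.card_fin]

open Polynomial in
lemma prod_X_sub_C_eq_descPochhammer (k : ℕ) :
    ∏ j ∈ Finset.range k, ((X : ℝ[X]) - C (j : ℝ)) = descPochhammer ℝ k := by
  induction k with
  | zero => simp
  | succ k ih =>
    rw [Finset.prod_range_succ, ih, descPochhammer_succ_right]
    simp [C_eq_natCast]

open Polynomial in
lemma X_pow_eq_sum_descPochhammer (n : ℕ) :
    (X : ℝ[X]) ^ n =
      ∑ π : Finpartition (univ : Finset (Fin n)), descPochhammer ℝ π.parts.card := by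
  have key : ∀ x : ℕ, IsRoot ((X : ℝ[X]) ^ n -
      ∑ π : Finpartition (univ : Finset (Fin n)), descPochhammer ℝ π.parts.card) (x : ℝ) := by
    intro x
    simp only [IsRoot, eval_sub, eval_pow, eval_X, eval_finset_sum,
      descPochhammer_eval_eq_descFactorial, sub_eq_zero]
    rw [← Nat.cast_pow]
    rw [pow_eq_sum_descFactorial n x]
    push_cast
    rfl
  have hinf : Set.Infinite {r : ℝ | IsRoot ((X : ℝ[X]) ^ n -
      ∑ π : Finpartition (univ : Finset (Fin n)), descPochhammer ℝ π.parts.card) r} := by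
    apply Set.Infinite.mono (s := Set.range ((↑) : ℕ → ℝ))
    · rintro _ ⟨x, rfl⟩; exact key x
    · exact Set.infinite_range_of_injective Nat.cast_injective
  have := Polynomial.eq_zero_of_infinite_isRoot _ hinf
  linear_combination this

open Polynomial in
/-- Rota's theorem: if `L : ℝ[X] → ℝ` is the linear functional with
`L(X(X-1)⋯(X-n+1)) = 1` for all `n ≥ 0`, then `L(Xⁿ) = Bₙ` for all `n ≥ 0`. -/
theorem rota (L : ℝ[X] →ₗ[ℝ] ℝ)
    (hL : ∀ n : ℕ, L (∏ j ∈ Finset.range n, (X - C (j : ℝ))) = 1) :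
    ∀ n : ℕ, L (X ^ n) = bell n := by
  intro n
  rw [X_pow_eq_sum_descPochhammer n, map_sum]
  have h1 : ∀ π : Finpartition (univ : Finset (Fin n)),
      L (descPochhammer ℝ π.parts.card) = 1 := by
    intro π
    rw [← prod_X_sub_C_eq_descPochhammer]
    exact hL _
  rw [Finset.sum_congr rfl fun π _ => h1 π, Finset.sum_const, Finset.card_univ]
  simp [bell]
end

section
/- (Cigler) Define functions f_n : ℝ → ℝ by f_0(x) = e^x and f_{n+1}(x) = x · f_n′(x). Then for every n ≥ 0 and every real x, f_n(x) = φ_n(x)·e^x, i.e., (x·d/dx)^n applied to e^x equals e^x times the n-th exponential polynomial. -/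
/-- Stirling numbers of the second kind: `S(0,0) = 1`, `S(0,k) = 0` for `k > 0`,
`S(n+1,0) = 0` and `S(n+1,k) = S(n,k-1) + k·S(n,k)` for `k ≥ 1`. -/
def stirling : ℕ → ℕ → ℕ
  | 0, 0 => 1
  | 0, _ + 1 => 0
  | _ + 1, 0 => 0
  | n + 1, k + 1 => stirling n k + (k + 1) * stirling n (k + 1)

/-- The `n`-th exponential polynomial `φ_n(x) = Σ_{k=0}^n S(n,k) x^k`. -/
noncomputable def expPoly (n : ℕ) (x : ℝ) : ℝ :=
  ∑ k ∈ Finset.range (n + 1), (stirling n k : ℝ) * x ^ k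

lemma stirling_eq_zero : ∀ n k : ℕ, n < k → stirling n k = 0
  | 0, 0, h => absurd h (by omega)
  | 0, k + 1, _ => rfl
  | n + 1, 0, h => absurd h (by omega)
  | n + 1, k + 1, h => by
      have h1 : stirling n k = 0 := stirling_eq_zero n k (by omega)
      have h2 : stirling n (k + 1) = 0 := stirling_eq_zero n (k + 1) (by omega)
      simp [stirling, h1, h2]

lemma expPoly_hasDeriv (n : ℕ) (x : ℝ) :
    HasDerivAt (expPoly n)
      (∑ k ∈ Finset.range (n + 1), (stirling n k : ℝ) * (k * x ^ (k - 1))) x := by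
  have : HasDerivAt (fun y : ℝ => ∑ k ∈ Finset.range (n + 1), (stirling n k : ℝ) * y ^ k)
      (∑ k ∈ Finset.range (n + 1), (stirling n k : ℝ) * (k * x ^ (k - 1))) x := by
    apply HasDerivAt.fun_sum
    intro k _
    exact (hasDerivAt_pow k x).const_mul _
  exact this

lemma key (n : ℕ) (x : ℝ) :
    x * ((∑ k ∈ Finset.range (n + 1), (stirling n k : ℝ) * (k * x ^ (k - 1)))
      + expPoly n x) = expPoly (n + 1) x := by
  have hL1 : x * (∑ k ∈ Finset.range (n + 1), (stirling n k : ℝ) * (k * x ^ (k - 1)))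
      = ∑ k ∈ Finset.range (n + 1), ((k : ℝ) * stirling n k) * x ^ k := by
    rw [Finset.mul_sum]
    refine Finset.sum_congr rfl fun k _ => ?_
    cases k with
    | zero => simp
    | succ m =>
        simp only [Nat.add_sub_cancel]
        push_cast
        ring
  have hL1' : ∑ k ∈ Finset.range (n + 1), ((k : ℝ) * stirling n k) * x ^ k
      = ∑ k ∈ Finset.range (n + 1), (((k : ℝ) + 1) * stirling n (k + 1)) * x ^ (k + 1) := by
    rw [Finset.sum_range_succ' (fun k => ((k : ℝ) * stirling n k) * x ^ k)]
    rw [Finset.sum_range_succ]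
    simp [stirling_eq_zero n (n + 1) (by omega)]
  have hL2 : x * expPoly n x
      = ∑ k ∈ Finset.range (n + 1), (stirling n k : ℝ) * x ^ (k + 1) := by
    rw [expPoly, Finset.mul_sum]
    refine Finset.sum_congr rfl fun k _ => by ring
  have hR : expPoly (n + 1) x
      = ∑ k ∈ Finset.range (n + 1),
          ((stirling n k : ℝ) + ((k : ℝ) + 1) * stirling n (k + 1)) * x ^ (k + 1) := by
    rw [expPoly, Finset.sum_range_succ' (fun k => (stirling (n + 1) k : ℝ) * x ^ k)]
    simp only [stirling, Nat.cast_add, Nat.cast_mul, Nat.cast_zero]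
    push_cast
    ring
  rw [mul_add, hL1, hL1', hL2, hR, ← Finset.sum_add_distrib]
  refine Finset.sum_congr rfl fun k _ => by ring

/-- Cigler: if `f_0(x) = e^x` and `f_{n+1}(x) = x · f_n'(x)`, then `f_n(x) = φ_n(x)·e^x`,
i.e. `(x·d/dx)^n e^x = φ_n(x) e^x`. -/
theorem cigler_xD_exp (f : ℕ → ℝ → ℝ) (h0 : ∀ x : ℝ, f 0 x = Real.exp x)
    (hsucc : ∀ (n : ℕ) (x : ℝ), f (n + 1) x = x * deriv (f n) x) :
    ∀ (n : ℕ) (x : ℝ), f n x = expPoly n x * Real.exp x := by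
  intro n
  induction n with
  | zero =>
      intro x
      simp [h0 x, expPoly, stirling]
  | succ n ih =>
      intro x
      have hfn : f n = fun y => expPoly n y * Real.exp y := funext ih
      have hD : HasDerivAt (fun y => expPoly n y * Real.exp y)
          ((∑ k ∈ Finset.range (n + 1), (stirling n k : ℝ) * (k * x ^ (k - 1)))
            * Real.exp x + expPoly n x * Real.exp x) x :=
        (expPoly_hasDeriv n x).mul (Real.hasDerivAt_exp x)
      rw [hsucc n x, hfn, hD.deriv]
      have := key n x
      nlinarith [Real.exp_pos x, this]
end

section
/- Fix a real number q with 0 < q < 1. For every natural number n, Σ_{k≥0} ([k]_q [k−1]_q ⋯ [k−n+1]_q) / [k]_q! = e_q(1); equivalently, the random variable X_q taking value [k]_q with probability e_q(1)^{−1}/[k]_q! (the q-Poisson distribution with parameter 1) satisfies L_q(X_q^{\underline{n}}) = 1 for all n ≥ 0, where X_q^{\underline{n}} denotes the q-falling factorial [k]_q [k−1]_q ⋯ [k−n+1]_q (equal to 0 when k < n and to 1 when n = 0). -/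
/-- The `q`-integer `[m]_q = (1 - q^m)/(1 - q)`. -/
noncomputable def qInt (q : ℝ) (m : ℕ) : ℝ := (1 - q ^ m) / (1 - q)

/-- The `q`-factorial `[k]_q! = [1]_q [2]_q ⋯ [k]_q`, with `[0]_q! = 1`. -/
noncomputable def qFactorial (q : ℝ) (k : ℕ) : ℝ := ∏ j ∈ Finset.range k, qInt q (j + 1)

lemma qInt_pos {q : ℝ} (hq0 : 0 < q) (hq1 : q < 1) {m : ℕ} (hm : 0 < m) :
    0 < qInt q m := by
  have h1 : q ^ m < 1 := pow_lt_one₀ hq0.le hq1 hm.ne'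
  exact div_pos (by linarith) (by linarith)

lemma qFactorial_pos {q : ℝ} (hq0 : 0 < q) (hq1 : q < 1) (k : ℕ) :
    0 < qFactorial q k := by
  exact Finset.prod_pos fun j _ => qInt_pos hq0 hq1 (Nat.succ_pos j)

lemma qFactorial_succ (q : ℝ) (k : ℕ) :
    qFactorial q (k + 1) = qFactorial q k * qInt q (k + 1) := by
  simp [qFactorial, Finset.prod_range_succ]

lemma falling_mul (q : ℝ) (n : ℕ) : ∀ k : ℕ, n ≤ k →
    (∏ j ∈ Finset.range n, qInt q (k - j)) * qFactorial q (k - n) = qFactorial q k := by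
  induction n with
  | zero => intro k _; simp
  | succ n ih =>
    intro k hk
    have hn : n ≤ k := le_of_lt (Nat.lt_of_succ_le hk)
    have h1 : k - n = (k - (n + 1)) + 1 := by omega
    have h2 : qFactorial q (k - n) = qFactorial q (k - (n + 1)) * qInt q (k - n) := by
      have h3 : k - (n + 1) + 1 = k - n := by omega
      rw [h1, qFactorial_succ, h3]
    rw [Finset.prod_range_succ, ← ih k hn, h2]
    ring

/-- The `q`-Poisson distribution with parameter `1` has all `q`-falling-factorial
moments equal to `1`: `Σ_{k ≥ 0} [k]_q [k-1]_q ⋯ [k-n+1]_q / [k]_q! = e_q(1)`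
(here `k - j` is truncated subtraction on `ℕ`, so the `q`-falling factorial vanishes
when `k < n` since `[0]_q = 0`, and equals `1` for `n = 0`). -/
theorem qPoisson_fallingFactorial_moment (q : ℝ) (hq0 : 0 < q) (hq1 : q < 1) (n : ℕ) :
    ∑' k : ℕ, (∏ j ∈ Finset.range n, qInt q (k - j)) / qFactorial q k =
      ∑' k : ℕ, (1 : ℝ) / qFactorial q k := by
  have hterm : ∀ k : ℕ, n ≤ k →
      (∏ j ∈ Finset.range n, qInt q (k - j)) / qFactorial q k
        = 1 / qFactorial q (k - n) := by
    intro k hk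
    have h := falling_mul q n k hk
    have h1 := (qFactorial_pos hq0 hq1 k).ne'
    have h2 := (qFactorial_pos hq0 hq1 (k - n)).ne'
    field_simp
    linarith [h]
  have hzero : ∀ k : ℕ, k < n →
      (∏ j ∈ Finset.range n, qInt q (k - j)) / qFactorial q k = 0 := by
    intro k hk
    have : (∏ j ∈ Finset.range n, qInt q (k - j)) = 0 := by
      apply Finset.prod_eq_zero (Finset.mem_range.mpr hk)
      simp [Nat.sub_self, qInt]
    simp [this]
  apply tsum_eq_tsum_of_ne_zero_bij (fun m => (m : ℕ) + n)
  · intro a b hab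
    simp only [add_left_inj] at hab
    exact Subtype.ext hab
  · intro k hk
    rcases lt_or_ge k n with h | h
    · exact absurd (hzero k h) hk
    · refine ⟨⟨k - n, ?_⟩, by simp; omega⟩
      simp only [Function.mem_support]
      have := (qFactorial_pos hq0 hq1 (k - n)).ne'
      simp [this]
  · intro x
    rw [hterm _ (Nat.le_add_left n x)]
    simp
end
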